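/- (Existence of BPR equilibrium under conflicting preferences.) Assume d_A·d_B < 0, d_A² > p, and d_B² > p. Then the digital representative game admits a Nash equilibrium (α_A*, α_B*) with α_A* ∈ (0,1) and α_B* ∈ (0,1), i.e., both members partially reveal information at equilibrium. -/

import Mathlib

/-!
Given the other member's revelation `b`, the derivative of `α ↦ L_A(α, b)` is
`λ'(α) d_A² / 2 · (f_A(α) − h_A(b))`, and `f_A` is strictly increasing, so a zero of
`f_A − h_A(b)` is a global minimiser. Since `f_A(0) = 2p / d_A² < 2 ≤ h_A(b)` and `f_A → ∞` at `1`,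
the intermediate value theorem gives such a zero in `(0, M]` for some `M < 1` that works for
every `b ∈ [0, M]`. Conflicting preferences (`d_A d_B < 0`) make `h_A` increasing, so both best
responses are monotone self-maps of `[0, M]`, and Knaster–Tarski yields a fixed point of their
composition.
-/

open Set Filter

/-- Team decision formed by the two digital representatives. -/
noncomputable def teamDec (lam : ℝ → ℝ) (thA thB mu : ℝ) (aA aB : ℝ) : ℝ :=
  (lam aA * thA + (1 - lam aA) * mu + lam aB * thB + (1 - lam aB) * mu) / 2

/-- Alice's total loss: preference loss plus communication cost. -/
noncomputable def lossA (lam c : ℝ → ℝ) (thA thB mu : ℝ) (aA aB : ℝ) : ℝ :=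
  (thA - teamDec lam thA thB mu aA aB) ^ 2 + c aA

/-- Bob's total loss: preference loss plus communication cost. -/
noncomputable def lossB (lam c : ℝ → ℝ) (thA thB mu : ℝ) (aA aB : ℝ) : ℝ :=
  (thB - teamDec lam thA thB mu aA aB) ^ 2 + c aB

/-- The function `f_m(α) = λ(α) + (2/d_m²)·c'(α)/λ'(α)`. -/
noncomputable def fFun (lam lam' c' : ℝ → ℝ) (d : ℝ) (α : ℝ) : ℝ :=
  lam α + (2 / d ^ 2) * (c' α / lam' α)

/-- The function `h_m(α) = 2 − λ(α)·d_{−m}/d_m`. -/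
noncomputable def hFun (lam : ℝ → ℝ) (dm dOther : ℝ) (α : ℝ) : ℝ :=
  2 - lam α * dOther / dm

/-- `a` is a best response of Alice to Bob's revelation `aB`:
it minimizes `α ↦ L_A(α, aB)` over `[0,1)`. -/
def IsBestRespA (lam c : ℝ → ℝ) (thA thB mu : ℝ) (a aB : ℝ) : Prop :=
  a ∈ Set.Ico (0:ℝ) 1 ∧
    ∀ x ∈ Set.Ico (0:ℝ) 1, lossA lam c thA thB mu a aB ≤ lossA lam c thA thB mu x aB

/-- Nash equilibrium of the digital representative game. -/
def IsNashEq (lam c : ℝ → ℝ) (thA thB mu : ℝ) (aA aB : ℝ) : Prop :=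
  aA ∈ Set.Ico (0:ℝ) 1 ∧ aB ∈ Set.Ico (0:ℝ) 1 ∧
  (∀ α ∈ Set.Ico (0:ℝ) 1, lossA lam c thA thB mu aA aB ≤ lossA lam c thA thB mu α aB) ∧
  (∀ α ∈ Set.Ico (0:ℝ) 1, lossB lam c thA thB mu aA aB ≤ lossB lam c thA thB mu aA α)

theorem strictMonoOn_of_hasDerivAt_pos {D : Set ℝ} (hD : Convex ℝ D) {f f' : ℝ → ℝ}
    (hf : ∀ x ∈ D, HasDerivAt f (f' x) x) (hf' : ∀ x ∈ D, 0 < f' x) : StrictMonoOn f D :=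
  strictMonoOn_of_hasDerivWithinAt_pos hD
    (fun x hx => (hf x hx).continuousAt.continuousWithinAt)
    (fun x hx => (hf x (interior_subset hx)).hasDerivWithinAt)
    (fun x hx => hf' x (interior_subset hx))

theorem isMinOn_of_hasDerivAt_of_sign {f f' : ℝ → ℝ} {s : Set ℝ} {a : ℝ} (hs : s.OrdConnected)
    (ha : a ∈ s) (hf : ∀ x ∈ s, HasDerivAt f (f' x) x) (hleft : ∀ x ∈ s, x < a → f' x ≤ 0)
    (hright : ∀ x ∈ s, a < x → 0 ≤ f' x) : IsMinOn f s a := by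
  have hcont : ∀ {x y}, x ∈ s → y ∈ s → ContinuousOn f (Icc x y) := fun hx hy z hz =>
    (hf z (hs.out hx hy hz)).continuousAt.continuousWithinAt
  have hderiv : ∀ {x y}, x ∈ s → y ∈ s →
      ∀ z ∈ interior (Icc x y), HasDerivWithinAt f (f' z) (interior (Icc x y)) z :=
    fun hx hy z hz => (hf z (hs.out hx hy (interior_subset hz))).hasDerivWithinAt
  refine isMinOn_iff.2 fun x hx => ?_
  rcases lt_or_ge x a with hxa | hax
  · refine antitoneOn_of_hasDerivWithinAt_nonpos (convex_Icc x a) (hcont hx ha) (hderiv hx ha)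
      (fun z hz => ?_) (left_mem_Icc.2 hxa.le) (right_mem_Icc.2 hxa.le) hxa.le
    rw [interior_Icc] at hz
    exact hleft z (hs.out hx ha (Ioo_subset_Icc_self hz)) hz.2
  · refine monotoneOn_of_hasDerivWithinAt_nonneg (convex_Icc a x) (hcont ha hx) (hderiv ha hx)
      (fun z hz => ?_) (left_mem_Icc.2 hax) (right_mem_Icc.2 hax) hax
    rw [interior_Icc] at hz
    exact hright z (hs.out ha hx (Ioo_subset_Icc_self hz)) hz.1

theorem exists_monotoneOn_solution {f g : ℝ → ℝ} {s : Set ℝ} {p q : ℝ} (hpq : p ≤ q)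
    (hf : StrictMonoOn f (Icc p q)) (hfc : ContinuousOn f (Icc p q)) (hg : MonotoneOn g s)
    (hgf : ∀ y ∈ s, g y ∈ Ioc (f p) (f q)) :
    ∃ φ : ℝ → ℝ, MonotoneOn φ s ∧ ∀ y ∈ s, φ y ∈ Ioc p q ∧ f (φ y) = g y := by
  choose! φ hφ hfφ using fun y (hy : y ∈ s) => intermediate_value_Ioc hpq hfc (hgf y hy)
  refine ⟨φ, fun y hy z hz hyz => ?_, fun y hy => ⟨hφ y hy, hfφ y hy⟩⟩
  rw [← hf.le_iff_le (Ioc_subset_Icc_self (hφ y hy)) (Ioc_subset_Icc_self (hφ z hz)),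
    hfφ y hy, hfφ z hz]
  exact hg hy hz hyz

theorem exists_fixedPt_of_monotoneOn_Icc {T : ℝ → ℝ} {a b : ℝ} (hab : a ≤ b)
    (hT : MonotoneOn T (Icc a b)) (hmaps : MapsTo T (Icc a b) (Icc a b)) :
    ∃ x ∈ Icc a b, T x = x := by
  have := Fact.mk hab
  let T' : Icc a b →o Icc a b := ⟨hmaps.restrict, fun x y h => hT x.2 y.2 h⟩
  exact ⟨T'.lfp, T'.lfp.2, congrArg Subtype.val T'.map_lfp⟩

section

variable {lam lam' c c' : ℝ → ℝ}

theorem lossB_eq_lossA_swap (thA thB mu aA aB : ℝ) :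
    lossB lam c thA thB mu aA aB = lossA lam c thB thA mu aB aA := by
  unfold lossB lossA teamDec
  ring

theorem hasDerivAt_lossA {thA thB mu b x : ℝ} (hlam : HasDerivAt lam (lam' x) x)
    (hc : HasDerivAt c (c' x) x) (hlam' : lam' x ≠ 0) (hd : thA - mu ≠ 0) :
    HasDerivAt (fun y => lossA lam c thA thB mu y b)
      (lam' x * ((thA - mu) ^ 2 / 2) *
        (fFun lam lam' c' (thA - mu) x - hFun lam (thA - mu) (thB - mu) b)) x := by
  have hT : HasDerivAt (fun y => teamDec lam thA thB mu y b) (lam' x * (thA - mu) / 2) x :=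
    (((((hlam.mul_const thA).add (((hasDerivAt_const x 1).sub hlam).mul_const mu)).add
      (hasDerivAt_const x (lam b * thB))).add (hasDerivAt_const x ((1 - lam b) * mu))).div_const
      2).congr_deriv (by ring)
  refine ((((hasDerivAt_const x thA).sub hT).pow 2).add hc).congr_deriv ?_
  simp only [fFun, hFun, teamDec, Pi.sub_apply]
  field_simp
  ring

theorem fFun_strictMonoOn {s : Set ℝ} (d : ℝ) (hlam : StrictMonoOn lam s)
    (hlam'pos : ∀ x ∈ s, 0 < lam' x) (hlam' : AntitoneOn lam' s)
    (hc'nonneg : ∀ x ∈ s, 0 ≤ c' x) (hc' : MonotoneOn c' s) :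
    StrictMonoOn (fFun lam lam' c' d) s := by
  intro x hx y hy hxy
  have hratio : c' x / lam' x ≤ c' y / lam' y :=
    div_le_div₀ (hc'nonneg y hy) (hc' hx hy hxy.le) (hlam'pos y hy) (hlam' hx hy hxy.le)
  exact add_lt_add_of_lt_of_le (hlam hx hy hxy) (mul_le_mul_of_nonneg_left hratio (by positivity))

theorem continuousOn_fFun {s : Set ℝ} (d : ℝ) (hlam : ContinuousOn lam s)
    (hlam' : ContinuousOn lam' s) (hc' : ContinuousOn c' s) (hne : ∀ x ∈ s, lam' x ≠ 0) :
    ContinuousOn (fFun lam lam' c' d) s :=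
  hlam.add (continuousOn_const.mul (hc'.div hlam' hne))

theorem fFun_zero_lt_two {d : ℝ} (hlam0 : lam 0 = 0) (hp : c' 0 / lam' 0 < d ^ 2) :
    fFun lam lam' c' d 0 < 2 := by
  unfold fFun
  rw [hlam0, zero_add]
  rcases eq_or_ne d 0 with rfl | hd
  · norm_num
  calc 2 / d ^ 2 * (c' 0 / lam' 0) < 2 / d ^ 2 * d ^ 2 := by gcongr
    _ = 2 := by field_simp

theorem tendsto_fFun_atTop {d : ℝ} (hd : d ≠ 0) (hlam : ∀ x ∈ Ico (0:ℝ) 1, 0 ≤ lam x)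
    (hlam'pos : ∀ x ∈ Icc (0:ℝ) 1, 0 < lam' x) (hlam' : AntitoneOn lam' (Icc 0 1))
    (hc'nonneg : ∀ x ∈ Ico (0:ℝ) 1, 0 ≤ c' x) (hc'top : Tendsto c' (nhdsWithin 1 (Iio 1)) atTop) :
    Tendsto (fFun lam lam' c' d) (nhdsWithin 1 (Iio 1)) atTop := by
  have h0 : (0:ℝ) ∈ Icc 0 1 := left_mem_Icc.2 zero_le_one
  refine tendsto_atTop_mono' _ ?_
    (((hc'top.atTop_div_const (hlam'pos 0 h0)).const_mul_atTop (by positivity : 0 < 2 / d ^ 2)))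
  filter_upwards [Ico_mem_nhdsLT (zero_lt_one' ℝ)] with x hx
  have hx' : x ∈ Icc (0:ℝ) 1 := Ico_subset_Icc_self hx
  calc 2 / d ^ 2 * (c' x / lam' 0) ≤ 2 / d ^ 2 * (c' x / lam' x) := by
        gcongr
        exacts [hc'nonneg x hx, hlam'pos x hx', hlam' h0 hx' hx.1]
    _ ≤ fFun lam lam' c' d x := le_add_of_nonneg_left (hlam x hx)

theorem hFun_monotoneOn {s : Set ℝ} {dm dOther : ℝ} (hconf : dm * dOther < 0)
    (hlam : MonotoneOn lam s) : MonotoneOn (hFun lam dm dOther) s := by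
  have hdm : dm ≠ 0 := left_ne_zero_of_mul hconf.ne
  have hratio : dOther / dm < 0 := by
    rw [show dOther / dm = dm * dOther / dm ^ 2 by field_simp]
    exact div_neg_of_neg_of_pos hconf (by positivity)
  intro x hx y hy hxy
  simp only [hFun, mul_div_assoc]
  exact sub_le_sub_left (mul_le_mul_of_nonpos_right (hlam hx hy hxy) hratio.le) 2

theorem isMinOn_lossA_of_fFun_eq_hFun {thA thB mu a b : ℝ}
    (hlam : ∀ x ∈ Ico (0:ℝ) 1, HasDerivAt lam (lam' x) x) (hlam'pos : ∀ x ∈ Ico (0:ℝ) 1, 0 < lam' x)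
    (hc : ∀ x ∈ Ico (0:ℝ) 1, HasDerivAt c (c' x) x)
    (hf : StrictMonoOn (fFun lam lam' c' (thA - mu)) (Ico 0 1)) (hd : thA - mu ≠ 0)
    (ha : a ∈ Ico (0:ℝ) 1)
    (hab : fFun lam lam' c' (thA - mu) a = hFun lam (thA - mu) (thB - mu) b) :
    IsMinOn (fun x => lossA lam c thA thB mu x b) (Ico 0 1) a := by
  have hscale : ∀ x ∈ Ico (0:ℝ) 1, 0 < lam' x * ((thA - mu) ^ 2 / 2) := fun x hx =>
    mul_pos (hlam'pos x hx) (by positivity)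
  refine isMinOn_of_hasDerivAt_of_sign ordConnected_Ico ha
    (fun x hx => hasDerivAt_lossA (hlam x hx) (hc x hx) (hlam'pos x hx).ne' hd)
    (fun x hx hxa => ?_) (fun x hx hax => ?_)
  · exact mul_nonpos_of_nonneg_of_nonpos (hscale x hx).le (by linarith [hf hx ha hxa])
  · exact mul_nonneg (hscale x hx).le (by linarith [hf ha hx hax])

theorem exists_monotoneOn_fFun_eq_hFun {d dOther M : ℝ} (hconf : d * dOther < 0)
    (hlam0 : lam 0 = 0) (hlam : MonotoneOn lam (Icc 0 1))
    (hf : StrictMonoOn (fFun lam lam' c' d) (Ico 0 1))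
    (hfc : ContinuousOn (fFun lam lam' c' d) (Ico 0 1)) (hp : c' 0 / lam' 0 < d ^ 2)
    (hM : M ∈ Ioo (0:ℝ) 1) (hfM : hFun lam d dOther 1 ≤ fFun lam lam' c' d M) :
    ∃ φ : ℝ → ℝ, MonotoneOn φ (Icc 0 M) ∧
      ∀ b ∈ Icc 0 M, φ b ∈ Ioc 0 M ∧ fFun lam lam' c' d (φ b) = hFun lam d dOther b := by
  have hIco : Icc 0 M ⊆ Ico (0:ℝ) 1 := Icc_subset_Ico_right hM.2
  have hIcc : Icc 0 M ⊆ Icc (0:ℝ) 1 := Icc_subset_Icc_right hM.2.le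
  have hh := hFun_monotoneOn hconf hlam
  refine exists_monotoneOn_solution hM.1.le (hf.mono hIco) (hfc.mono hIco) (hh.mono hIcc)
    fun b hb => ⟨?_, ?_⟩
  · calc fFun lam lam' c' d 0 < 2 := fFun_zero_lt_two hlam0 hp
      _ = hFun lam d dOther 0 := by simp [hFun, hlam0]
      _ ≤ hFun lam d dOther b := hh (left_mem_Icc.2 zero_le_one) (hIcc hb) hb.1
  · exact (hh (hIcc hb) (right_mem_Icc.2 zero_le_one) (hIcc hb).2).trans hfM

theorem isNashEq_of_fFun_eq_hFun {thA thB mu a b : ℝ}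
    (hlam : ∀ x ∈ Ico (0:ℝ) 1, HasDerivAt lam (lam' x) x) (hlam'pos : ∀ x ∈ Ico (0:ℝ) 1, 0 < lam' x)
    (hc : ∀ x ∈ Ico (0:ℝ) 1, HasDerivAt c (c' x) x)
    (hf : ∀ d, StrictMonoOn (fFun lam lam' c' d) (Ico 0 1))
    (hdA : thA - mu ≠ 0) (hdB : thB - mu ≠ 0) (ha : a ∈ Ico (0:ℝ) 1) (hb : b ∈ Ico (0:ℝ) 1)
    (hA : fFun lam lam' c' (thA - mu) a = hFun lam (thA - mu) (thB - mu) b)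
    (hB : fFun lam lam' c' (thB - mu) b = hFun lam (thB - mu) (thA - mu) a) :
    IsNashEq lam c thA thB mu a b := by
  refine ⟨ha, hb,
    isMinOn_iff.1 (isMinOn_lossA_of_fFun_eq_hFun hlam hlam'pos hc (hf _) hdA ha hA), ?_⟩
  simpa only [lossB_eq_lossA_swap] using
    isMinOn_iff.1 (isMinOn_lossA_of_fFun_eq_hFun hlam hlam'pos hc (hf _) hdB hb hB)

end

theorem BPR_equilibrium_exists_conflicting_general
    (lam lam' c c' : ℝ → ℝ)
    (hlamDeriv : ∀ α ∈ Set.Icc (0:ℝ) 1, HasDerivAt lam (lam' α) α)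
    (hlam'Cont : ContinuousOn lam' (Set.Icc (0:ℝ) 1))
    (hlam0 : lam 0 = 0)
    (hlam'pos : ∀ α ∈ Set.Icc (0:ℝ) 1, 0 < lam' α)
    (hlam'anti : ∀ x ∈ Set.Icc (0:ℝ) 1, ∀ y ∈ Set.Icc (0:ℝ) 1, x ≤ y → lam' y ≤ lam' x)
    (hcDeriv : ∀ α ∈ Set.Ico (0:ℝ) 1, HasDerivAt c (c' α) α)
    (hc'Cont : ContinuousOn c' (Set.Ico (0:ℝ) 1))
    (hc'nonneg : ∀ α ∈ Set.Ico (0:ℝ) 1, 0 ≤ c' α)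
    (hc'strictMono : ∀ x ∈ Set.Ico (0:ℝ) 1, ∀ y ∈ Set.Ico (0:ℝ) 1, x < y → c' x < c' y)
    (hc'top : Filter.Tendsto c' (nhdsWithin 1 (Set.Iio 1)) Filter.atTop)
    (thA thB muG dA dB : ℝ)
    (hdA : dA = thA - muG) (hdB : dB = thB - muG)
    (hconf : dA * dB < 0)
    (hpA : dA ^ 2 > c' 0 / lam' 0) (hpB : dB ^ 2 > c' 0 / lam' 0) :
    ∃ aA aB : ℝ, aA ∈ Set.Ioo (0:ℝ) 1 ∧ aB ∈ Set.Ioo (0:ℝ) 1 ∧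
      IsNashEq lam c thA thB muG aA aB := by
  subst hdA hdB
  have hIco : Ico (0:ℝ) 1 ⊆ Icc 0 1 := Ico_subset_Icc_self
  have hlam : StrictMonoOn lam (Icc 0 1) :=
    strictMonoOn_of_hasDerivAt_pos (convex_Icc 0 1) hlamDeriv hlam'pos
  have hlam' : AntitoneOn lam' (Icc 0 1) := fun x hx y hy => hlam'anti x hx y hy
  have hc' : StrictMonoOn c' (Ico 0 1) := fun x hx y hy => hc'strictMono x hx y hy
  have hf (d : ℝ) : StrictMonoOn (fFun lam lam' c' d) (Ico 0 1) :=
    fFun_strictMonoOn d (hlam.mono hIco) (fun x hx => hlam'pos x (hIco hx)) (hlam'.mono hIco)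
      hc'nonneg hc'.monotoneOn
  have hfc (d : ℝ) : ContinuousOn (fFun lam lam' c' d) (Ico 0 1) :=
    continuousOn_fFun d (fun x hx => (hlamDeriv x (hIco hx)).continuousAt.continuousWithinAt)
      (hlam'Cont.mono hIco) hc'Cont (fun x hx => (hlam'pos x (hIco hx)).ne')
  have hlam_nonneg : ∀ x ∈ Ico (0:ℝ) 1, 0 ≤ lam x := fun x hx =>
    hlam0 ▸ hlam.monotoneOn (left_mem_Icc.2 zero_le_one) (hIco hx) hx.1
  have hdA := left_ne_zero_of_mul hconf.ne
  have hdB := right_ne_zero_of_mul hconf.ne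
  have hlarge {d : ℝ} (hd : d ≠ 0) (t : ℝ) :
      ∀ᶠ M in nhdsWithin 1 (Iio 1), t ≤ fFun lam lam' c' d M :=
    (tendsto_fFun_atTop hd hlam_nonneg hlam'pos hlam' hc'nonneg hc'top).eventually_ge_atTop t
  obtain ⟨M, ⟨hMA, hMB⟩, hM⟩ := ((hlarge hdA (hFun lam _ (thB - muG) 1)).and
    (hlarge hdB (hFun lam _ (thA - muG) 1))).and (Ioo_mem_nhdsLT zero_lt_one) |>.exists
  obtain ⟨φA, hφA, hA⟩ :=
    exists_monotoneOn_fFun_eq_hFun hconf hlam0 hlam.monotoneOn (hf _) (hfc _) hpA hM hMA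
  obtain ⟨φB, hφB, hB⟩ := exists_monotoneOn_fFun_eq_hFun (by linarith) hlam0 hlam.monotoneOn
    (hf _) (hfc _) hpB hM hMB
  have hmapsA : MapsTo φA (Icc 0 M) (Icc 0 M) := fun b hb => Ioc_subset_Icc_self (hA b hb).1
  have hmapsB : MapsTo φB (Icc 0 M) (Icc 0 M) := fun a ha => Ioc_subset_Icc_self (hB a ha).1
  obtain ⟨a, ha, hfix⟩ :=
    exists_fixedPt_of_monotoneOn_Icc hM.1.le (hφA.comp hφB hmapsB) (hmapsA.comp hmapsB)
  obtain ⟨haM, hcritA⟩ := hA (φB a) (hmapsB ha)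
  rw [show φA (φB a) = a from hfix] at haM hcritA
  obtain ⟨hbM, hcritB⟩ := hB a ha
  have hIoo : Ioc 0 M ⊆ Ioo (0:ℝ) 1 := Ioc_subset_Ioo_right hM.2
  refine ⟨a, φB a, hIoo haM, hIoo hbM, isNashEq_of_fFun_eq_hFun
    (fun x hx => hlamDeriv x (hIco hx)) (fun x hx => hlam'pos x (hIco hx)) hcDeriv hf hdA hdB
    (Ioo_subset_Ico_self (hIoo haM)) (Ioo_subset_Ico_self (hIoo hbM)) hcritA hcritB⟩

/-- Existence of BPR equilibrium under conflicting preferences. If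
`d_A·d_B < 0`, `d_A² > p` and `d_B² > p`, the game admits a Nash equilibrium in which both
members partially reveal information. -/
theorem BPR_equilibrium_exists_conflicting
    (lam lam' c c' : ℝ → ℝ)
    (hlamDeriv : ∀ α ∈ Set.Icc (0:ℝ) 1, HasDerivAt lam (lam' α) α)
    (hlam'Cont : ContinuousOn lam' (Set.Icc (0:ℝ) 1))
    (hlam0 : lam 0 = 0) (hlam1 : lam 1 = 1)
    (hlam'pos : ∀ α ∈ Set.Icc (0:ℝ) 1, 0 < lam' α)
    (hlam'anti : ∀ x ∈ Set.Icc (0:ℝ) 1, ∀ y ∈ Set.Icc (0:ℝ) 1, x ≤ y → lam' y ≤ lam' x)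
    (hcDeriv : ∀ α ∈ Set.Ico (0:ℝ) 1, HasDerivAt c (c' α) α)
    (hc'Cont : ContinuousOn c' (Set.Ico (0:ℝ) 1))
    (hc0 : c 0 = 0)
    (hc'nonneg : ∀ α ∈ Set.Ico (0:ℝ) 1, 0 ≤ c' α)
    (hc'strictMono : ∀ x ∈ Set.Ico (0:ℝ) 1, ∀ y ∈ Set.Ico (0:ℝ) 1, x < y → c' x < c' y)
    (hc'top : Filter.Tendsto c' (nhdsWithin 1 (Set.Iio 1)) Filter.atTop)
    (thA thB muG dA dB : ℝ)
    (hdA : dA = thA - muG) (hdB : dB = thB - muG)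
    (hconf : dA * dB < 0)
    (hpA : dA ^ 2 > c' 0 / lam' 0) (hpB : dB ^ 2 > c' 0 / lam' 0) :
    ∃ aA aB : ℝ, aA ∈ Set.Ioo (0:ℝ) 1 ∧ aB ∈ Set.Ioo (0:ℝ) 1 ∧
      IsNashEq lam c thA thB muG aA aB :=
  BPR_equilibrium_exists_conflicting_general lam lam' c c' hlamDeriv hlam'Cont hlam0 hlam'pos
    hlam'anti hcDeriv hc'Cont hc'nonneg hc'strictMono hc'top thA thB muG dA dB hdA hdB hconf hpA hpB
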